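/- Let M = {(x,y,z) ∈ ℝ³ : x²+y² > 4}, φ(x,y,z) = (√(x²+y²), z), and p(x,y,z) = ln(x²+y²)/ln 2. Then the weight w = |dφ|^{p−2} equals √2^{p−2} = (x²+y²)^{1/2}/2, and the p(·)-tension field τ_{p(·)}(φ) = (div(w∇φ₁), div(w∇φ₂)) is the constant vector (1, 0) on M. In particular φ is not p(·)-harmonic but τ_{p(·)}(φ) is parallel. -/

import Mathlib

/-!
Since `p = log₂ s` with `s = x² + y²`, the weight is `w = √2 ^ (log₂ s - 2) = √s / 2`. As
`∇φ₁ = (x, y, 0) / √s`, the field `w ∇φ₁ = (x, y, 0) / 2` is linear with trace `1`, while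
`w ∇φ₂ = (√s / 2) e₃` has a coefficient independent of `z`, hence divergence `0`.
-/
open Real InnerProductSpace

theorem sqrt_rpow_logb_sub_two {b s : ℝ} (hb : 0 < b) (hb₁ : b ≠ 1) (hs : 0 < s) :
    √b ^ (logb b s - 2) = √s / b := by
  rw [sqrt_eq_rpow, ← rpow_mul hb.le, mul_sub, rpow_sub hb, one_div_mul_eq_div,
    div_eq_mul_one_div (logb b s), rpow_mul hb.le, rpow_logb hb hb₁ hs, ← sqrt_eq_rpow]
  norm_num

namespace EuclideanSpace

variable {ι : Type*} [Fintype ι] [DecidableEq ι]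

theorem hasGradientAt_apply (i : ι) (y : EuclideanSpace ℝ ι) :
    HasGradientAt (fun z : EuclideanSpace ℝ ι => z i) (single i 1) y := by
  rw [hasGradientAt_iff_hasFDerivAt]
  refine (proj i : EuclideanSpace ℝ ι →L[ℝ] ℝ).hasFDerivAt.congr_fderiv ?_
  ext v
  simp [EuclideanSpace.inner_single_left]

theorem hasGradientAt_sqrt_sq_add_sq (i k : ι) {y : EuclideanSpace ℝ ι}
    (hy : 0 < y i ^ 2 + y k ^ 2) :
    HasGradientAt (fun z : EuclideanSpace ℝ ι => √(z i ^ 2 + z k ^ 2))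
      ((√(y i ^ 2 + y k ^ 2))⁻¹ • (y i • single i 1 + y k • single k 1)) y := by
  have hi := (hasGradientAt_apply i y).hasFDerivAt
  have hk := (hasGradientAt_apply k y).hasFDerivAt
  rw [hasGradientAt_iff_hasFDerivAt]
  refine (((hi.pow 2).add (hk.pow 2)).sqrt hy.ne').congr_fderiv ?_
  ext v
  simp only [Pi.add_apply, Nat.add_one_sub_one, pow_one, nsmul_eq_mul, Nat.cast_ofNat, smul_add,
    add_apply, smul_apply, toDual_apply_apply, smul_eq_mul, map_add, map_smul]
  field_simp

noncomputable def divergence (F : EuclideanSpace ℝ ι → EuclideanSpace ℝ ι)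
    (x : EuclideanSpace ℝ ι) : ℝ :=
  ∑ j, fderiv ℝ F x (single j 1) j

theorem divergence_continuousLinearMap (T : EuclideanSpace ℝ ι →L[ℝ] EuclideanSpace ℝ ι)
    (x : EuclideanSpace ℝ ι) : divergence T x = ∑ j, T (single j 1) j := by
  simp [divergence, T.fderiv]

theorem divergence_smul_const {f : EuclideanSpace ℝ ι → ℝ} {f' : EuclideanSpace ℝ ι →L[ℝ] ℝ}
    {x : EuclideanSpace ℝ ι} (hf : HasFDerivAt f f' x) (v : EuclideanSpace ℝ ι) :
    divergence (fun y => f y • v) x = f' v := by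
  simp only [divergence, (hf.smul_const v).fderiv, ContinuousLinearMap.smulRight_apply]
  conv_rhs => rw [← (EuclideanSpace.basisFun ι ℝ).sum_repr v]
  simp [mul_comm]

theorem _root_.Filter.EventuallyEq.divergence_eq {F G : EuclideanSpace ℝ ι → EuclideanSpace ℝ ι}
    {x : EuclideanSpace ℝ ι} (h : F =ᶠ[nhds x] G) : divergence F x = divergence G x := by
  simp only [divergence, h.fderiv_eq]

end EuclideanSpace

open EuclideanSpace Filter Topology

/-- On `M = {(x,y,z) : x²+y² > 4}` with `φ(x,y,z) = (√(x²+y²), z)` and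
`p = ln(x²+y²)/ln 2`, the weight `w = |dφ|^{p−2} = √2^{p−2}` equals `√(x²+y²)/2`, and the
`p(·)`-tension field `(div(w∇φ₁), div(w∇φ₂))` is the constant vector `(1,0)`. -/
theorem stmt_11 (q : EuclideanSpace ℝ (Fin 3)) (hq : (q 0) ^ 2 + (q 1) ^ 2 > 4)
    (p w : EuclideanSpace ℝ (Fin 3) → ℝ)
    (hp : ∀ y, p y = Real.log ((y 0) ^ 2 + (y 1) ^ 2) / Real.log 2)
    (hw : ∀ y, w y = Real.sqrt 2 ^ (p y - 2)) :
    w q = Real.sqrt ((q 0) ^ 2 + (q 1) ^ 2) / 2 ∧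
    (∑ j, fderiv ℝ
        (fun y : EuclideanSpace ℝ (Fin 3) =>
          w y • gradient (fun z : EuclideanSpace ℝ (Fin 3) => Real.sqrt ((z 0) ^ 2 + (z 1) ^ 2)) y)
        q (EuclideanSpace.single j 1) j = 1) ∧
    (∑ j, fderiv ℝ
        (fun y : EuclideanSpace ℝ (Fin 3) =>
          w y • gradient (fun z : EuclideanSpace ℝ (Fin 3) => z 2) y)
        q (EuclideanSpace.single j 1) j = 0) := by
  have hw_eq (y : EuclideanSpace ℝ (Fin 3)) (hy : 0 < y 0 ^ 2 + y 1 ^ 2) :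
      w y = √(y 0 ^ 2 + y 1 ^ 2) / 2 := by
    rw [hw, hp, ← logb, sqrt_rpow_logb_sub_two two_pos (by norm_num) hy]
  have hpos : ∀ᶠ y : EuclideanSpace ℝ (Fin 3) in 𝓝 q, 0 < y 0 ^ 2 + y 1 ^ 2 :=
    ((by fun_prop : Continuous fun y : EuclideanSpace ℝ (Fin 3) => y 0 ^ 2 + y 1 ^ 2).tendsto q)
      |>.eventually (lt_mem_nhds (by linarith))
  refine ⟨hw_eq q hpos.self_of_nhds, ?_, ?_⟩
  · change divergence _ q = 1
    set T : EuclideanSpace ℝ (Fin 3) →L[ℝ] EuclideanSpace ℝ (Fin 3) :=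
      (2 : ℝ)⁻¹ • ((proj 0).smulRight (single 0 1) + (proj 1).smulRight (single 1 1))
    have hT : (fun y => w y • gradient (fun z : EuclideanSpace ℝ (Fin 3) =>
        √(z 0 ^ 2 + z 1 ^ 2)) y) =ᶠ[𝓝 q] T := by
      filter_upwards [hpos] with y hy
      have hρ_ne : √(y 0 ^ 2 + y 1 ^ 2) ≠ 0 := (sqrt_pos.mpr hy).ne'
      rw [(hasGradientAt_sqrt_sq_add_sq 0 1 hy).gradient, hw_eq y hy, smul_smul]
      simp only [smul_add, add_apply, smul_apply, ContinuousLinearMap.smulRight_apply,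
        PiLp.proj_apply, T]
      field_simp
    rw [hT.divergence_eq, divergence_continuousLinearMap, Fin.sum_univ_three]
    simp [T]
    norm_num
  · change divergence _ q = 0
    have hF : (fun y => w y • gradient (fun z : EuclideanSpace ℝ (Fin 3) => z 2) y) =ᶠ[𝓝 q]
        fun y => √(y 0 ^ 2 + y 1 ^ 2) • ((2 : ℝ)⁻¹ • single 2 1) := by
      filter_upwards [hpos] with y hy
      rw [(hasGradientAt_apply 2 y).gradient, hw_eq y hy, smul_smul, div_eq_mul_inv]
    rw [hF.divergence_eq,
      divergence_smul_const (hasGradientAt_sqrt_sq_add_sq 0 1 hpos.self_of_nhds).hasFDerivAt]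
    simp [EuclideanSpace.inner_single_left]
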